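/- (Alperin–Peterson) Let Γ be a finite abelian group and S ⊆ Γ with S = −S. The Cayley graph Cay(Γ,S) is integral if and only if S belongs to the Boolean algebra B(Γ) generated by the subgroups of Γ. -/

import Mathlib

open Pointwise

/-- The Boolean algebra of subsets of `Γ` generated by the subgroups of `Γ`. -/
inductive InB (Γ : Type*) [AddGroup Γ] : Set Γ → Prop
  | subgroup (H : AddSubgroup Γ) : InB Γ (H : Set Γ)
  | compl {S : Set Γ} : InB Γ S → InB Γ Sᶜ
  | union {S T : Set Γ} : InB Γ S → InB Γ T → InB Γ (S ∪ T)

/-- `Atom a` is the set of elements generating the same cyclic subgroup as `a`. -/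
def Atom {Γ : Type*} [AddGroup Γ] (a : Γ) : Set Γ :=
  {b | AddSubgroup.zmultiples a = AddSubgroup.zmultiples b}

/-!
The characters of `Γ` form an eigenbasis of the Cayley matrix, so its eigenvalues are the character
sums `∑_{s ∈ S} χ s`. These are sums of `n`-th roots of unity, `n` the exponent of `Γ`, and such a
sum is an integer iff it is fixed by `Gal(ℚ(ζₙ)/ℚ)`, i.e. iff it does not change when every root is
raised to a power `k` coprime to `n`. By Fourier inversion this holds for all characters iff
`k • S = S`. Finally, `S` is stable under all these `k` iff it is a union of atoms (the sets of
generators of cyclic subgroups), and the unions of atoms form exactly the Boolean algebra `B(Γ)`: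
each atom is `⟨a⟩` minus the cyclic subgroups not containing `a`, and subgroups are unions of atoms.
-/

namespace InB

variable {Γ : Type*} [AddGroup Γ]

theorem empty : InB Γ ∅ := by
  simpa using (subgroup (⊤ : AddSubgroup Γ)).compl

theorem inter {S T : Set Γ} (hS : InB Γ S) (hT : InB Γ T) : InB Γ (S ∩ T) := by
  simpa [Set.compl_union] using (hS.compl.union hT.compl).compl

theorem diff {S T : Set Γ} (hS : InB Γ S) (hT : InB Γ T) : InB Γ (S \ T) :=
  hS.inter hT.compl

theorem biUnion {ι : Type*} (t : Finset ι) {f : ι → Set Γ} (h : ∀ i ∈ t, InB Γ (f i)) :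
    InB Γ (⋃ i ∈ t, f i) := by
  classical
  induction t using Finset.induction_on with
  | empty => simpa using empty
  | insert a t _ ih =>
    rw [Finset.set_biUnion_insert]
    exact (h a (t.mem_insert_self a)).union (ih fun i hi => h i (Finset.mem_insert_of_mem hi))

theorem atom_subset {S : Set Γ} (hS : InB Γ S) {a : Γ} (ha : a ∈ S) : Atom a ⊆ S := by
  induction hS generalizing a with
  | subgroup H =>
    intro b hb
    exact AddSubgroup.zmultiples_le.2 ha (hb ▸ AddSubgroup.mem_zmultiples b)
  | compl _ ih => exact fun b hb hbS => ha (ih hbS hb.symm)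
  | union _ _ ih₁ ih₂ =>
    exact ha.elim (fun h => (ih₁ h).trans Set.subset_union_left)
      (fun h => (ih₂ h).trans Set.subset_union_right)

end InB

section Atoms

variable {Γ : Type*} [AddGroup Γ]

theorem atom_eq_diff [Fintype Γ] (a : Γ) :
    Atom a = (AddSubgroup.zmultiples a : Set Γ) \
      ⋃ c ∈ Finset.univ.filter (a ∉ AddSubgroup.zmultiples ·),
        (AddSubgroup.zmultiples c : Set Γ) := by
  ext b
  simp only [Atom, Set.mem_ofPred_eq, Set.mem_sdiff, SetLike.mem_coe, Set.mem_iUnion,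
    Finset.mem_filter, Finset.mem_univ, true_and, exists_prop, not_exists, not_and]
  refine ⟨fun h => ⟨h ▸ AddSubgroup.mem_zmultiples b, fun c hac hbc => hac ?_⟩,
    fun ⟨hba, hb⟩ => le_antisymm ?_ (AddSubgroup.zmultiples_le.2 hba)⟩
  · exact AddSubgroup.zmultiples_le.2 hbc (h ▸ AddSubgroup.mem_zmultiples a)
  · by_contra hab
    exact hb b (fun h => hab (AddSubgroup.zmultiples_le.2 h)) (AddSubgroup.mem_zmultiples b)

theorem inB_atom [Finite Γ] (a : Γ) : InB Γ (Atom a) := by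
  cases nonempty_fintype Γ
  rw [atom_eq_diff]
  exact (InB.subgroup _).diff (InB.biUnion _ fun c _ => InB.subgroup _)

theorem inB_iff_atom_subset [Finite Γ] {S : Set Γ} : InB Γ S ↔ ∀ a ∈ S, Atom a ⊆ S := by
  refine ⟨fun hS a ha => hS.atom_subset ha, fun h => ?_⟩
  cases nonempty_fintype Γ
  classical
  have hS : S = ⋃ a ∈ S.toFinset, Atom a := by
    ext b
    simp only [Set.mem_iUnion, Set.mem_toFinset, exists_prop]
    exact ⟨fun hb => ⟨b, hb, rfl⟩, fun ⟨a, ha, hb⟩ => h a ha hb⟩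
  rw [hS]
  exact InB.biUnion _ fun a _ => inB_atom a

end Atoms

theorem Nat.exists_coprime_modEq {m d n : ℕ} (hdn : d ∣ n) (hn : n ≠ 0) (hm : m.Coprime d) :
    ∃ k, k.Coprime n ∧ k ≡ m [MOD d] := by
  have : NeZero n := ⟨hn⟩
  obtain ⟨U, hU⟩ := ZMod.unitsMap_surjective hdn (ZMod.unitOfCoprime m hm)
  refine ⟨(U : ZMod n).val, ZMod.val_coe_unit_coprime U, (ZMod.natCast_eq_natCast_iff _ _ _).1 ?_⟩
  rw [ZMod.natCast_val, ← ZMod.unitsMap_val hdn, hU, ZMod.coe_unitOfCoprime]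

section Coprime

variable {Γ : Type*} [AddGroup Γ] [Finite Γ]

theorem mem_atom_iff_exists_coprime_nsmul {a b : Γ} :
    b ∈ Atom a ↔ ∃ k : ℕ, k.Coprime (AddMonoid.exponent Γ) ∧ k • a = b := by
  constructor
  · intro h
    obtain ⟨m, rfl⟩ : ∃ m : ℕ, m • a = b :=
      mem_multiples_iff_mem_zmultiples.2 (h ▸ AddSubgroup.mem_zmultiples b)
    have hord : addOrderOf (m • a) = addOrderOf a := by
      rw [← Nat.card_zmultiples, ← h, Nat.card_zmultiples]
    have hm : m.Coprime (addOrderOf a) := by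
      rw [addOrderOf_nsmul, Nat.div_eq_self] at hord
      exact Nat.coprime_comm.1 (hord.resolve_left (addOrderOf_pos a).ne')
    obtain ⟨k, hk, hkm⟩ := Nat.exists_coprime_modEq (AddMonoid.addOrder_dvd_exponent a)
      AddMonoid.exponent_ne_zero_of_finite hm
    exact ⟨k, hk, nsmul_eq_nsmul_iff_modEq.2 hkm⟩
  · rintro ⟨k, hk, rfl⟩
    obtain ⟨m, hm⟩ := exists_nsmul_eq_self_of_coprime
      (hk.coprime_dvd_right (AddMonoid.addOrder_dvd_exponent a))
    refine le_antisymm (AddSubgroup.zmultiples_le.2 ?_) (AddSubgroup.zmultiples_le.2 ?_)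
    · simpa only [hm] using AddSubgroup.nsmul_mem _ (AddSubgroup.mem_zmultiples (k • a)) m
    · exact AddSubgroup.nsmul_mem _ (AddSubgroup.mem_zmultiples a) k

theorem inB_iff_forall_coprime_nsmul_mem {S : Set Γ} :
    InB Γ S ↔ ∀ k : ℕ, k.Coprime (AddMonoid.exponent Γ) → ∀ a ∈ S, k • a ∈ S := by
  simp only [inB_iff_atom_subset, Set.subset_def, mem_atom_iff_exists_coprime_nsmul]
  exact ⟨fun h k hk a ha => h a ha _ ⟨k, hk, rfl⟩, fun h a ha _ ⟨k, hk, hb⟩ => hb ▸ h k hk a ha⟩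

end Coprime

theorem nsmul_injective_of_coprime_exponent {Γ : Type*} [AddCommGroup Γ] {k : ℕ}
    (hk : k.Coprime (AddMonoid.exponent Γ)) :
    Function.Injective (k • · : Γ → Γ) := by
  intro a b hab
  have h0 : k • (a - b) = 0 := by rw [smul_sub, sub_eq_zero]; exact hab
  have h1 : addOrderOf (a - b) = 1 := Nat.eq_one_of_dvd_coprimes hk
    (addOrderOf_dvd_of_nsmul_eq_zero h0) (AddMonoid.addOrder_dvd_exponent _)
  rwa [AddMonoid.addOrderOf_eq_one_iff, sub_eq_zero] at h1

section Characters

variable {Γ : Type*} [AddCommGroup Γ] [Fintype Γ]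

theorem AddChar.sum_apply_neg_mul_sum [DecidableEq Γ] (T : Finset Γ) (x : Γ) :
    ∑ χ : AddChar Γ ℂ, χ (-x) * ∑ t ∈ T, χ t = if x ∈ T then (Fintype.card Γ : ℂ) else 0 := by
  calc ∑ χ : AddChar Γ ℂ, χ (-x) * ∑ t ∈ T, χ t
      = ∑ t ∈ T, ∑ χ : AddChar Γ ℂ, χ (-x + t) := by
        simp only [Finset.mul_sum, AddChar.map_add_eq_mul]
        exact Finset.sum_comm
    _ = ∑ t ∈ T, if x = t then (Fintype.card Γ : ℂ) else 0 := by
        simp only [AddChar.sum_apply_eq_ite, neg_add_eq_zero]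
    _ = if x ∈ T then (Fintype.card Γ : ℂ) else 0 := Finset.sum_ite_eq T x _

theorem AddChar.finset_eq_of_forall_sum_eq {T U : Finset Γ}
    (h : ∀ χ : AddChar Γ ℂ, ∑ t ∈ T, χ t = ∑ t ∈ U, χ t) : T = U := by
  classical
  ext x
  have hx := AddChar.sum_apply_neg_mul_sum T x
  simp only [h, AddChar.sum_apply_neg_mul_sum U x] at hx
  have hcard : (Fintype.card Γ : ℂ) ≠ 0 := Nat.cast_ne_zero.2 Fintype.card_ne_zero
  by_cases hT : x ∈ T <;> by_cases hU : x ∈ U <;> simp_all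

theorem forall_nsmul_mem_iff_forall_sum_pow_eq {T : Finset Γ} {k : ℕ}
    (hk : Function.Injective (k • · : Γ → Γ)) :
    (∀ a ∈ T, k • a ∈ T) ↔ ∀ χ : AddChar Γ ℂ, ∑ t ∈ T, χ t ^ k = ∑ t ∈ T, χ t := by
  classical
  have hsum (χ : AddChar Γ ℂ) : ∑ t ∈ T, χ t ^ k = ∑ t ∈ T.image (k • ·), χ t := by
    simp only [Finset.sum_image fun a _ b _ hab => hk hab, AddChar.map_nsmul_eq_pow]
  simp only [hsum]
  constructor
  · intro h χ
    rw [Finset.eq_of_subset_of_card_le (Finset.image_subset_iff.2 h)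
      (Finset.card_image_of_injective T hk).ge]
  · intro h a ha
    rw [← AddChar.finset_eq_of_forall_sum_eq h]
    exact Finset.mem_image_of_mem _ ha

end Characters

theorem exists_intCast_eq_iff_forall_algEquiv_apply_eq {L : Type*} [Field L] [Algebra ℚ L]
    [IsGalois ℚ L] [FiniteDimensional ℚ L] {x : L} (hx : IsIntegral ℤ x) :
    (∃ m : ℤ, x = m) ↔ ∀ σ : Gal(L/ℚ), σ x = x := by
  rw [← IsGalois.mem_range_algebraMap_iff_fixed]
  constructor
  · rintro ⟨m, rfl⟩
    exact ⟨m, map_intCast _ m⟩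
  · rintro ⟨q, rfl⟩
    obtain ⟨m, rfl⟩ := IsIntegrallyClosed.isIntegral_iff.1
      (IsIntegral.tower_bot (algebraMap ℚ L).injective hx)
    exact ⟨m, by simp⟩

namespace IsCyclotomicExtension

variable {n : ℕ} [NeZero n] {L : Type*} [Field L] [Algebra ℚ L] [IsCyclotomicExtension {n} ℚ L]

theorem algEquiv_apply_eq_pow_of_pow_eq_one {σ : Gal(L/ℚ)} {k : ℕ}
    (hσ : σ (zeta n ℚ L) = zeta n ℚ L ^ k) {y : L} (hy : y ^ n = 1) : σ y = y ^ k := by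
  obtain ⟨i, -, rfl⟩ := (zeta_spec n ℚ L).eq_pow_of_pow_eq_one hy
  rw [map_pow, hσ, ← pow_mul, ← pow_mul, mul_comm]

theorem exists_coprime_algEquiv_apply_zeta (σ : Gal(L/ℚ)) :
    ∃ k, k.Coprime n ∧ σ (zeta n ℚ L) = zeta n ℚ L ^ k :=
  ⟨_, ZMod.val_coe_unit_coprime _, ((zeta_spec n ℚ L).autToPow_spec ℚ σ).symm⟩

theorem exists_algEquiv_apply_zeta {k : ℕ} (hk : k.Coprime n) :
    ∃ σ : Gal(L/ℚ), σ (zeta n ℚ L) = zeta n ℚ L ^ k :=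
  ⟨_, fromZetaAut_spec ((zeta_spec n ℚ L).pow_of_coprime k hk)
    (Polynomial.cyclotomic.irreducible_rat (NeZero.pos n))⟩

theorem exists_intCast_eq_sum_iff {ι : Type*} (T : Finset ι) {g : ι → L}
    (hg : ∀ s ∈ T, g s ^ n = 1) :
    (∃ m : ℤ, ∑ s ∈ T, g s = m) ↔ ∀ k, k.Coprime n → ∑ s ∈ T, g s ^ k = ∑ s ∈ T, g s := by
  have : IsGalois ℚ L := isGalois {n} ℚ L
  have : FiniteDimensional ℚ L := finiteDimensional {n} ℚ L
  have hint : IsIntegral ℤ (∑ s ∈ T, g s) := IsIntegral.sum _ fun s hs =>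
    IsIntegral.of_pow (NeZero.pos n) ((hg s hs).symm ▸ isIntegral_one)
  rw [exists_intCast_eq_iff_forall_algEquiv_apply_eq hint]
  constructor
  · intro h k hk
    obtain ⟨σ, hσ⟩ := exists_algEquiv_apply_zeta (L := L) hk
    calc ∑ s ∈ T, g s ^ k = ∑ s ∈ T, σ (g s) :=
          Finset.sum_congr rfl fun s hs => (algEquiv_apply_eq_pow_of_pow_eq_one hσ (hg s hs)).symm
      _ = ∑ s ∈ T, g s := by rw [← map_sum, h σ]
  · intro h σ
    obtain ⟨k, hk, hσ⟩ := exists_coprime_algEquiv_apply_zeta (n := n) σ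
    calc σ (∑ s ∈ T, g s) = ∑ s ∈ T, g s ^ k := by
          rw [map_sum]
          exact Finset.sum_congr rfl fun s hs => algEquiv_apply_eq_pow_of_pow_eq_one hσ (hg s hs)
      _ = ∑ s ∈ T, g s := h k hk

end IsCyclotomicExtension

theorem exists_intCast_eq_sum_iff_of_pow_eq_one {K : Type*} [Field K] [CharZero K] [IsAlgClosed K]
    {n : ℕ} [NeZero n] {ι : Type*} (T : Finset ι) {f : ι → K} (hf : ∀ s ∈ T, f s ^ n = 1) :
    (∃ m : ℤ, ∑ s ∈ T, f s = m) ↔ ∀ k, k.Coprime n → ∑ s ∈ T, f s ^ k = ∑ s ∈ T, f s := by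
  -- Instance search would pick `DivisionRing.toRatAlgebra`, not the algebra structure for which
  -- `IsCyclotomicExtension {n} ℚ (CyclotomicField n ℚ)` is registered.
  let : Algebra ℚ (CyclotomicField n ℚ) := CyclotomicField.algebra n ℚ
  have : NeZero (n : ℚ) := ⟨Nat.cast_ne_zero.2 (NeZero.ne n)⟩
  let ζ := IsCyclotomicExtension.zeta n ℚ (CyclotomicField n ℚ)
  have hζ : IsPrimitiveRoot ζ n := IsCyclotomicExtension.zeta_spec n ℚ _
  let φ : CyclotomicField n ℚ →ₐ[ℚ] K := IsAlgClosed.lift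
  have hpow : ∀ s ∈ T, ∃ i, φ (ζ ^ i) = f s := fun s hs => by
    obtain ⟨i, -, hi⟩ := (hζ.map_of_injective φ.injective).eq_pow_of_pow_eq_one (hf s hs)
    exact ⟨i, by rw [map_pow]; exact hi⟩
  choose! i hi using hpow
  have hsum (k : ℕ) : ∑ s ∈ T, f s ^ k = φ (∑ s ∈ T, (ζ ^ i s) ^ k) := by
    rw [map_sum]
    exact Finset.sum_congr rfl fun s hs => by rw [map_pow, hi s hs]
  have hg : ∀ s ∈ T, (ζ ^ i s) ^ n = 1 := fun s _ => by
    rw [← pow_mul, mul_comm, pow_mul, hζ.pow_eq_one, one_pow]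
  have hinj : Function.Injective φ := φ.injective
  have hφ {x : CyclotomicField n ℚ} {m : ℤ} : φ x = m ↔ x = m := hinj.eq_iff' (map_intCast φ m)
  have hsum_one : ∑ s ∈ T, f s = φ (∑ s ∈ T, ζ ^ i s) := by simpa only [pow_one] using hsum 1
  simp only [hsum, hsum_one, hφ, hinj.eq_iff]
  exact IsCyclotomicExtension.exists_intCast_eq_sum_iff (g := fun s => ζ ^ i s) T hg

theorem Matrix.spectrum_eq_range_of_mulVec_basis {R n ι : Type*} [Field R] [Fintype n]
    [DecidableEq n] [Fintype ι] [DecidableEq ι] (A : Matrix n n R) (b : Module.Basis ι R (n → R))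
    (d : ι → R) (hA : ∀ i, A.mulVec (b i) = d i • b i) : spectrum R A = Set.range d := by
  have hdiag : A.toLin' = (Matrix.diagonal d).toLin b b := b.ext fun i => by
    simp [Matrix.toLin_self, Matrix.diagonal_apply, hA i]
  rw [← Matrix.spectrum_toLin', hdiag, Matrix.spectrum_toLin, spectrum_diagonal]

section Cayley

variable {Γ : Type*} [AddCommGroup Γ] [Fintype Γ]

theorem cayley_mulVec_addChar (S : Set Γ) [DecidablePred (· ∈ S)] (χ : AddChar Γ ℂ) :
    (Matrix.of fun a b : Γ => if a - b ∈ S then (1 : ℂ) else 0).mulVec ⇑χ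
      = (∑ s ∈ S.toFinset, χ⁻¹ s) • ⇑χ := by
  ext a
  calc ∑ b, (if a - b ∈ S then (1 : ℂ) else 0) * χ b
      = ∑ s, (if s ∈ S then (1 : ℂ) else 0) * χ (a - s) :=
        Fintype.sum_equiv (Equiv.subLeft a) _ _ fun b => by simp
    _ = ∑ s ∈ S.toFinset, χ⁻¹ s * χ a := by
        simp [Finset.sum_ite, Set.filter_mem_univ_eq_toFinset, sub_eq_neg_add,
          AddChar.map_add_eq_mul]
    _ = ((∑ s ∈ S.toFinset, χ⁻¹ s) • ⇑χ) a := by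
        rw [Pi.smul_apply, smul_eq_mul, Finset.sum_mul]

theorem spectrum_cayley [DecidableEq Γ] (S : Set Γ) [DecidablePred (· ∈ S)] :
    spectrum ℂ (Matrix.of fun a b : Γ => if a - b ∈ S then (1 : ℂ) else 0)
      = Set.range fun χ : AddChar Γ ℂ => ∑ s ∈ S.toFinset, χ s := by
  classical
  rw [Matrix.spectrum_eq_range_of_mulVec_basis _ (AddChar.complexBasis Γ) _ fun χ => by
    rw [AddChar.complexBasis_apply, cayley_mulVec_addChar]]
  exact (Equiv.inv (AddChar Γ ℂ)).surjective.range_comp fun χ => ∑ s ∈ S.toFinset, χ s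

end Cayley

open scoped Classical in
theorem cayley_integral_iff_mem_B_general {Γ : Type*} [AddCommGroup Γ] [Fintype Γ]
    (S : Set Γ) :
    (∀ μ ∈ spectrum ℂ (Matrix.of fun a b : Γ => if a - b ∈ S then (1 : ℂ) else 0),
      ∃ k : ℤ, μ = (k : ℂ)) ↔ InB Γ S := by
  set n := AddMonoid.exponent Γ
  have : NeZero n := ⟨AddMonoid.exponent_ne_zero_of_finite⟩
  have hroot (χ : AddChar Γ ℂ) (s : Γ) : χ s ^ n = 1 := by
    rw [← AddChar.map_nsmul_eq_pow, AddMonoid.exponent_nsmul_eq_zero, AddChar.map_zero_eq_one]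
  rw [spectrum_cayley, Set.forall_mem_range, inB_iff_forall_coprime_nsmul_mem]
  calc (∀ χ : AddChar Γ ℂ, ∃ m : ℤ, ∑ s ∈ S.toFinset, χ s = m)
      ↔ ∀ χ : AddChar Γ ℂ, ∀ k : ℕ, k.Coprime n →
          ∑ s ∈ S.toFinset, χ s ^ k = ∑ s ∈ S.toFinset, χ s :=
        forall_congr' fun χ => exists_intCast_eq_sum_iff_of_pow_eq_one _ fun s _ => hroot χ s
    _ ↔ ∀ k : ℕ, k.Coprime n → ∀ χ : AddChar Γ ℂ,
          ∑ s ∈ S.toFinset, χ s ^ k = ∑ s ∈ S.toFinset, χ s :=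
        ⟨fun h k hk χ => h χ k hk, fun h χ k hk => h k hk χ⟩
    _ ↔ ∀ k : ℕ, k.Coprime n → ∀ a ∈ S, k • a ∈ S := forall₂_congr fun k hk => by
        simpa only [Set.mem_toFinset] using
          (forall_nsmul_mem_iff_forall_sum_pow_eq (T := S.toFinset)
            (nsmul_injective_of_coprime_exponent hk)).symm

open scoped Classical in
theorem cayley_integral_iff_mem_B {Γ : Type*} [AddCommGroup Γ] [Fintype Γ]
    (S : Set Γ) (hsym : -S = S) :
    (∀ μ ∈ spectrum ℂ (Matrix.of fun a b : Γ => if a - b ∈ S then (1 : ℂ) else 0),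
      ∃ k : ℤ, μ = (k : ℂ)) ↔ InB Γ S :=
  cayley_integral_iff_mem_B_general S
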